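/- Every outcome W produced by an execution of Rule X is in the α-core for α = 4·ln(2·u_max/u_min), where u_max = max_{i∈N} max_{W' feasible} u_i(W') and u_min = min_{i∈N} min_{W' ⊆ C : u_i(W') > 0} u_i(W'): for every S ⊆ N and T ⊆ C with cost(T) ≤ |S|/n there exist i ∈ S and c ∈ T such that u_i(W ∪ {c}) ≥ u_i(T)/α. -/

import Mathlib

open Finset

section PBDefs

variable {V C : Type*} [Fintype V] [DecidableEq V] [Fintype C] [DecidableEq C]

/-- Total cost (as a real number) of a set of candidates. -/
def costOf (cost : C → ℚ) (T : Finset C) : ℝ := ∑ c ∈ T, (cost c : ℝ)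

/-- Total (additive) utility of voter `i` for a set of candidates. -/
def util (u : V → C → ℝ) (i : V) (T : Finset C) : ℝ := ∑ c ∈ T, u i c

/-- A set of candidates is feasible if its total cost is within the budget of 1. -/
def feasible (cost : C → ℚ) (W : Finset C) : Prop := costOf cost W ≤ 1

/-- The validity conditions of a PB election: positive costs, utilities in `[0,1]`,
and every candidate is assigned positive utility by some voter. -/
def validPB (cost : C → ℚ) (u : V → C → ℝ) : Prop :=
  (∀ c, 0 < cost c) ∧ (∀ i c, 0 ≤ u i c ∧ u i c ≤ 1) ∧ (∀ c, ∃ i, 0 < u i c)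

/-- Extended justified representation, up to one project: for every (α,T)-cohesive
(nonempty) group `S` of voters, some voter `i ∈ S` gets utility at least `∑ c ∈ T, α c`,
or some voter `i ∈ S` would exceed this utility after adding one more candidate. -/
def EJRupToOne (cost : C → ℚ) (u : V → C → ℝ) (W : Finset C) : Prop :=
  ∀ (α : C → ℝ) (S : Finset V) (T : Finset C),
    (∀ c, 0 ≤ α c ∧ α c ≤ 1) →
    S.Nonempty →
    costOf cost T * (Fintype.card V : ℝ) ≤ (S.card : ℝ) →
    (∀ i ∈ S, ∀ c ∈ T, α c ≤ u i c) →
    (∃ i ∈ S, (∑ c ∈ T, α c) ≤ util u i W) ∨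
      (∃ i ∈ S, ∃ a : C, (∑ c ∈ T, α c) < util u i (insert a W))

/-- Extended justified representation (exact version): for every (α,T)-cohesive
(nonempty) group `S` of voters, some voter `i ∈ S` gets utility at least `∑ c ∈ T, α c`. -/
def EJRexact (cost : C → ℚ) (u : V → C → ℝ) (W : Finset C) : Prop :=
  ∀ (α : C → ℝ) (S : Finset V) (T : Finset C),
    (∀ c, 0 ≤ α c ∧ α c ≤ 1) →
    S.Nonempty →
    costOf cost T * (Fintype.card V : ℝ) ≤ (S.card : ℝ) →
    (∀ i ∈ S, ∀ c ∈ T, α c ≤ u i c) →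
    ∃ i ∈ S, (∑ c ∈ T, α c) ≤ util u i W

/-- A (nonempty) group `S` of voters is weakly (β,T)-cohesive. -/
def weaklyCohesive (cost : C → ℚ) (u : V → C → ℝ) (β : ℝ) (S : Finset V) (T : Finset C) :
    Prop :=
  S.Nonempty ∧ costOf cost T * (Fintype.card V : ℝ) ≤ (S.card : ℝ) ∧
    ∀ i ∈ S, β ≤ util u i T

/-- Full justified representation. -/
def FJR (cost : C → ℚ) (u : V → C → ℝ) (W : Finset C) : Prop :=
  ∀ (β : ℝ) (S : Finset V) (T : Finset C),
    weaklyCohesive cost u β S T → ∃ i ∈ S, β ≤ util u i W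

/-- An outcome is exhaustive if no further candidate fits within the budget. -/
def exhaustive (cost : C → ℚ) (W : Finset C) : Prop :=
  ∀ c ∉ W, 1 < costOf cost (insert c W)

/-- The core: no nonempty group `S` of voters together with a set `T` of candidates
affordable with `S`'s share of the budget can block the outcome. -/
def inCore (cost : C → ℚ) (u : V → C → ℝ) (W : Finset C) : Prop :=
  ∀ (S : Finset V) (T : Finset C), S.Nonempty →
    costOf cost T * (Fintype.card V : ℝ) ≤ (S.card : ℝ) →
    ∃ i ∈ S, util u i T ≤ util u i W

/-- The multiplicative `a`-approximate core. -/
def inAlphaCore (cost : C → ℚ) (u : V → C → ℝ) (a : ℝ) (W : Finset C) : Prop :=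
  ∀ (S : Finset V) (T : Finset C), T.Nonempty →
    costOf cost T ≤ (S.card : ℝ) / (Fintype.card V : ℝ) →
    ∃ i ∈ S, ∃ c ∈ T, util u i T / a ≤ util u i (insert c W)

/-- The total amount paid so far by voter `i`, given per-candidate payments. -/
def totalPaid (pay : V → C → ℝ) (i : V) : ℝ := ∑ c, pay i c

/-- A candidate `c` is ρ-affordable given the payments made so far. -/
def affordable (cost : C → ℚ) (u : V → C → ℝ) (pay : V → C → ℝ) (ρ : ℝ) (c : C) : Prop :=
  ∑ i, min (1 / (Fintype.card V : ℝ) - totalPaid pay i) (u i c * ρ) = (cost c : ℝ)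

/-- One step of Rule X: add a candidate that is ρ-affordable for the minimum ρ ≥ 0,
and record the corresponding payments. -/
def RuleXStep (cost : C → ℚ) (u : V → C → ℝ) :
    (Finset C × (V → C → ℝ)) → (Finset C × (V → C → ℝ)) → Prop := fun s t =>
  ∃ c ∉ s.1, ∃ ρ : ℝ, 0 ≤ ρ ∧ affordable cost u s.2 ρ c ∧
    (∀ ρ' : ℝ, 0 ≤ ρ' → ∀ c' ∉ s.1, affordable cost u s.2 ρ' c' → ρ ≤ ρ') ∧
    t = (insert c s.1,
      fun i c' => if c' = c then
        min (1 / (Fintype.card V : ℝ) - totalPaid s.2 i) (u i c * ρ) else s.2 i c')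

/-- Rule X terminates when no remaining candidate is ρ-affordable for any ρ ≥ 0. -/
def RuleXTerminal (cost : C → ℚ) (u : V → C → ℝ) (s : Finset C × (V → C → ℝ)) : Prop :=
  ∀ ρ : ℝ, 0 ≤ ρ → ∀ c ∉ s.1, ¬ affordable cost u s.2 ρ c

/-- `W` is the output of some execution of Rule X. -/
def RuleXOutcome (cost : C → ℚ) (u : V → C → ℝ) (W : Finset C) : Prop :=
  ∃ pay : V → C → ℝ,
    Relation.ReflTransGen (RuleXStep cost u) (∅, fun _ _ => 0) (W, pay) ∧
      RuleXTerminal cost u (W, pay)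

/-- One step of the Greedy Cohesive Rule: a state consists of the current outcome,
the active voters and the active candidates.  The rule picks a weakly (β,T)-cohesive
group of active voters with β maximal, breaking ties in favor of smaller `cost T`. -/
def GCRStep (cost : C → ℚ) (u : V → C → ℝ) :
    (Finset C × Finset V × Finset C) → (Finset C × Finset V × Finset C) → Prop := fun s t =>
  ∃ (β : ℝ) (S : Finset V) (T : Finset C),
    0 < β ∧ S ⊆ s.2.1 ∧ T ⊆ s.2.2 ∧ weaklyCohesive cost u β S T ∧
    (∀ (β' : ℝ) (S' : Finset V) (T' : Finset C), 0 < β' → S' ⊆ s.2.1 → T' ⊆ s.2.2 →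
      weaklyCohesive cost u β' S' T' → β' ≤ β) ∧
    (∀ (S' : Finset V) (T' : Finset C), S' ⊆ s.2.1 → T' ⊆ s.2.2 →
      weaklyCohesive cost u β S' T' → costOf cost T ≤ costOf cost T') ∧
    t = (s.1 ∪ T, s.2.1 \ S, s.2.2 \ T)

/-- GCR terminates when no weakly cohesive group of active voters remains. -/
def GCRTerminal (cost : C → ℚ) (u : V → C → ℝ) (s : Finset C × Finset V × Finset C) : Prop :=
  ∀ (β : ℝ) (S : Finset V) (T : Finset C), 0 < β → S ⊆ s.2.1 → T ⊆ s.2.2 →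
    ¬ weaklyCohesive cost u β S T

/-- `W` is the output of some execution of the Greedy Cohesive Rule. -/
def GCROutcome (cost : C → ℚ) (u : V → C → ℝ) (W : Finset C) : Prop :=
  ∃ (AV : Finset V) (AC : Finset C),
    Relation.ReflTransGen (GCRStep cost u) (∅, Finset.univ, Finset.univ) (W, AV, AC) ∧
      GCRTerminal cost u (W, AV, AC)

/-- A price system `(b, p)` (with nonnegative payments) supports the outcome `W`:
conditions (C1)-(C5). -/
def supports (cost : C → ℚ) (u : V → C → ℝ) (b : ℝ) (p : V → C → ℝ) (W : Finset C) : Prop :=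
  1 ≤ b ∧ (∀ i c, 0 ≤ p i c) ∧
  (∀ i c, u i c = 0 → p i c = 0) ∧
  (∀ i, ∑ c, p i c ≤ b / (Fintype.card V : ℝ)) ∧
  (∀ c ∈ W, ∑ i, p i c = (cost c : ℝ)) ∧
  (∀ c ∉ W, ∑ i, p i c = 0) ∧
  (∀ c ∉ W, ∑ i ∈ Finset.univ.filter (fun i => 0 < u i c),
    (b / (Fintype.card V : ℝ) - ∑ c' ∈ W, p i c') ≤ (cost c : ℝ))

/-- An outcome is priceable if some price system supports it. -/
def priceable (cost : C → ℚ) (u : V → C → ℝ) (W : Finset C) : Prop :=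
  ∃ (b : ℝ) (p : V → C → ℝ), supports cost u b p W

/-- EJR for approval-based elections: every `T`-cohesive group contains a voter
with at least `|T|` approved candidates in `W`. -/
def approvalEJR (cost : C → ℚ) (A : V → Finset C) (W : Finset C) : Prop :=
  ∀ (S : Finset V) (T : Finset C), S.Nonempty →
    costOf cost T * (Fintype.card V : ℝ) ≤ (S.card : ℝ) →
    (∀ i ∈ S, T ⊆ A i) →
    ∃ i ∈ S, T.card ≤ (A i ∩ W).card

/-- The `t`-th harmonic number. -/
noncomputable def harm (t : ℕ) : ℝ := ∑ j ∈ Finset.range t, (1 : ℝ) / (j + 1)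

/-- The PAV score of an outcome. -/
noncomputable def PAVscore (A : V → Finset C) (W : Finset C) : ℝ := ∑ i, harm ((A i ∩ W).card)

end PBDefs

/-!
Suppose a coalition `S` blocks `W` with a set `T`: every `i ∈ S` values `T` more than `α` times
what `W` plus any single candidate of `T` gives them. Write `x i = u_i(T)` and fix a threshold
`z`. Stop Rule X before the first step bought at a rate above `ρ = α / (n z)`: every voter with
`x i ≤ z` can still pay `ρ` per unit of utility for each candidate of `T \ W`, and as none of
these is affordable, `(α - 1) ∑_{x i ≤ z} x i ≤ |S| z`. Integrating this layer-cake bound from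
`u_min` to `2 u_max` gives `(α - 1) |S| / 2 ≤ |S| ln(2 u_max / u_min)`, which fails for
`α = 4 ln(2 u_max / u_min)`.
-/

open Real

/-- A discrete form of `∑ᵢ (1 - xᵢ / Z) = ∫ₘᶻ (∑_{xᵢ ≤ t} xᵢ) / t² dt ≤ ∫ₘᶻ s / t dt`. -/
theorem sum_one_sub_div_le_mul_log {ι : Type*} (S : Finset ι) (x : ι → ℝ) {m s Z : ℝ}
    (hm : 0 < m) (hs : 0 ≤ s) (hmZ : m ≤ Z) (hmx : ∀ i ∈ S, m ≤ x i) (hxZ : ∀ i ∈ S, x i ≤ Z)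
    (hlayer : ∀ z, 0 < z → ∑ i ∈ S with x i ≤ z, x i ≤ s * z) :
    ∑ i ∈ S, (1 - x i / Z) ≤ s * log (Z / m) := by
  classical
  induction S using Finset.induction_on_max_value x generalizing Z with
  | empty => simpa using mul_nonneg hs (log_nonneg ((one_le_div hm).mpr hmZ))
  | insert j S hjS hmax ih =>
    set M := x j
    have hmM : m ≤ M := hmx j (mem_insert_self j S)
    have hM : 0 < M := hm.trans_le hmM
    have hMZ : M ≤ Z := hxZ j (mem_insert_self j S)
    have hZ : 0 < Z := hM.trans_le hMZ
    have hS : ∑ i ∈ S, (1 - x i / M) ≤ s * log (M / m) := by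
      refine ih hmM (fun i hi => hmx i (mem_insert_of_mem hi)) hmax fun z hz => ?_
      refine le_trans (sum_le_sum_of_subset_of_nonneg ?_ fun i hi _ => ?_) (hlayer z hz)
      · exact filter_subset_filter _ (subset_insert j S)
      · exact hm.le.trans (hmx i (filter_subset _ _ hi))
    have hsum : M + ∑ i ∈ S, x i ≤ s * M := by
      have hall : ∀ i ∈ insert j S, x i ≤ M := by simpa [M] using hmax
      simpa [filter_true_of_mem hall, sum_insert hjS] using hlayer M hM
    have hsplit : ∑ i ∈ insert j S, (1 - x i / Z)
        = ∑ i ∈ S, (1 - x i / M) + (1 / M - 1 / Z) * (M + ∑ i ∈ S, x i) := by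
      have hterm : ∀ i, 1 - x i / Z = (1 - x i / M) + (1 / M - 1 / Z) * x i := fun i => by
        field_simp
        ring
      rw [sum_insert hjS, sum_congr rfl fun i _ => hterm i, sum_add_distrib, ← mul_sum]
      field_simp
      ring
    have hlog : 1 - M / Z ≤ log (Z / M) := by
      have := log_le_sub_one_of_pos (div_pos hM hZ)
      rw [← inv_div, log_inv, inv_div] at this
      linarith
    calc ∑ i ∈ insert j S, (1 - x i / Z)
        ≤ s * log (M / m) + (1 / M - 1 / Z) * (s * M) := by
          rw [hsplit]
          gcongr
          linarith [one_div_le_one_div_of_le hM hMZ]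
      _ = s * (log (M / m) + (1 - M / Z)) := by field_simp
      _ ≤ s * (log (M / m) + log (Z / M)) := by gcongr
      _ = s * log (Z / m) := by
          rw [← log_mul (div_pos hM hm).ne' (div_pos hZ hM).ne', div_mul_div_cancel₀' hM.ne']

theorem mul_card_le_two_mul_mul_log {ι : Type*} (S : Finset ι) (x : ι → ℝ) {k m M s : ℝ}
    (hk : 0 < k) (hm : 0 < m) (hmM : m ≤ M) (hs : 0 ≤ s) (hmx : ∀ i ∈ S, m ≤ x i)
    (hxM : ∀ i ∈ S, x i ≤ M) (hlayer : ∀ z, 0 < z → k * ∑ i ∈ S with x i ≤ z, x i ≤ s * z) :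
    k * S.card ≤ 2 * s * log (2 * M / m) := by
  have key := sum_one_sub_div_le_mul_log S x (Z := 2 * M) hm (div_nonneg hs hk.le) (by linarith) hmx
    (fun i hi => by linarith [hxM i hi, hmx i hi]) fun z hz => by
      rw [div_mul_eq_mul_div, le_div_iff₀ hk, mul_comm]
      exact hlayer z hz
  have half : ∑ i ∈ S, (1 / 2 : ℝ) ≤ ∑ i ∈ S, (1 - x i / (2 * M)) :=
    sum_le_sum fun i hi => by
      rw [le_sub_comm, div_le_iff₀ (by linarith)]
      linarith [hxM i hi]
  rw [sum_const, nsmul_eq_mul] at half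
  rw [div_mul_eq_mul_div, le_div_iff₀ hk] at key
  linarith [mul_le_mul_of_nonneg_right half hk.le]

theorem two_lt_four_mul_log_two_mul_div {m M : ℝ} (hm : 0 < m) (hmM : m ≤ M) :
    2 < 4 * log (2 * M / m) := by
  have h2 : (2 : ℝ) ≤ 2 * M / m := by
    rw [le_div_iff₀ hm]
    linarith
  linarith [log_le_log two_pos h2, log_two_gt_d9]

section RuleX

variable {V C : Type*} {cost : C → ℚ} {u : V → C → ℝ}

theorem util_nonneg (hu : ∀ i c, 0 ≤ u i c) (i : V) (T : Finset C) : 0 ≤ util u i T :=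
  sum_nonneg fun c _ => hu i c

theorem util_mono (hu : ∀ i c, 0 ≤ u i c) (i : V) {T T' : Finset C} (h : T ⊆ T') :
    util u i T ≤ util u i T' :=
  sum_le_sum_of_subset_of_nonneg h fun c _ _ => hu i c

theorem util_insert [DecidableEq C] {c : C} {T : Finset C} (hc : c ∉ T) (i : V) :
    util u i (insert c T) = u i c + util u i T :=
  sum_insert hc

theorem nonempty_of_costOf_le_card_div [Fintype V] (hcost : ∀ c, 0 < cost c) {S : Finset V}
    {T : Finset C} (hT : T.Nonempty) (hTS : costOf cost T ≤ S.card / Fintype.card V) :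
    S.Nonempty := by
  rw [nonempty_iff_ne_empty]
  rintro rfl
  have : 0 < costOf cost T := sum_pos (fun c _ => by exact_mod_cast hcost c) hT
  simp only [card_empty, Nat.cast_zero, zero_div] at hTS
  linarith

/-- Invariant of Rule X as long as every step has been bought at a rate of at most `ρ`. -/
structure PaidAtRate [Fintype V] [Fintype C] (u : V → C → ℝ) (ρ : ℝ)
    (s : Finset C × (V → C → ℝ)) : Prop where
  pay_eq_zero : ∀ i, ∀ c ∉ s.1, s.2 i c = 0
  totalPaid_le_share : ∀ i, totalPaid s.2 i ≤ 1 / Fintype.card V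
  totalPaid_le_mul_util : ∀ i, totalPaid s.2 i ≤ ρ * util u i s.1

theorem paidAtRate_empty [Fintype V] [Fintype C] (ρ : ℝ) :
    PaidAtRate u ρ (∅, fun _ _ => 0) where
  pay_eq_zero _ _ _ := rfl
  totalPaid_le_share _ := by simp [totalPaid]
  totalPaid_le_mul_util _ := by simp [totalPaid, util]

theorem totalPaid_update [Fintype C] [DecidableEq C] {pay : V → C → ℝ} {c : C}
    (hc : ∀ i, pay i c = 0) (m : V → ℝ) (i : V) :
    totalPaid (fun i c' => if c' = c then m i else pay i c') i = m i + totalPaid pay i := by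
  simp only [totalPaid]
  rw [← add_sum_erase _ _ (mem_univ c), ← add_sum_erase _ (pay i) (mem_univ c), if_pos rfl,
    hc, zero_add]
  exact congrArg _ (sum_congr rfl fun c' hc' => if_neg (ne_of_mem_erase hc'))

theorem PaidAtRate.insert [Fintype V] [Fintype C] [DecidableEq C] (hu : ∀ i c, 0 ≤ u i c)
    {ρ r : ℝ} {s : Finset C × (V → C → ℝ)} (h : PaidAtRate u ρ s) {c : C} (hc : c ∉ s.1)
    (hr : r ≤ ρ) :
    PaidAtRate u ρ (insert c s.1, fun i c' => if c' = c then
      min (1 / (Fintype.card V : ℝ) - totalPaid s.2 i) (u i c * r) else s.2 i c') where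
  pay_eq_zero i c' hc' := by
    rw [mem_insert, not_or] at hc'
    simp only [if_neg hc'.1, h.pay_eq_zero i c' hc'.2]
  totalPaid_le_share i := by
    rw [totalPaid_update (fun i => h.pay_eq_zero i c hc)]
    linarith [min_le_left (1 / (Fintype.card V : ℝ) - totalPaid s.2 i) (u i c * r)]
  totalPaid_le_mul_util i := by
    rw [totalPaid_update (fun i => h.pay_eq_zero i c hc), util_insert hc, mul_add]
    have := mul_le_mul_of_nonneg_left hr (hu i c)
    linarith [min_le_right (1 / (Fintype.card V : ℝ) - totalPaid s.2 i) (u i c * r),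
      h.totalPaid_le_mul_util i]

theorem RuleXStep.reflTransGen_subset [Fintype V] [Fintype C] [DecidableEq C]
    {s t : Finset C × (V → C → ℝ)} (h : Relation.ReflTransGen (RuleXStep cost u) s t) :
    s.1 ⊆ t.1 := by
  induction h with
  | refl => exact subset_rfl
  | tail _ hstep ih =>
    obtain ⟨c, -, ρ, -, -, -, rfl⟩ := hstep
    exact ih.trans (subset_insert _ _)

/-- The state `t` is the one reached just before the first step whose rate exceeds `ρ`. -/
theorem exists_paidAtRate_not_affordable [Fintype V] [Fintype C] [DecidableEq C]
    (hu : ∀ i c, 0 ≤ u i c) {ρ : ℝ} {W : Finset C} {pay : V → C → ℝ}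
    (hterm : RuleXTerminal cost u (W, pay)) {s : Finset C × (V → C → ℝ)}
    (hs : Relation.ReflTransGen (RuleXStep cost u) s (W, pay)) (hinv : PaidAtRate u ρ s) :
    ∃ t : Finset C × (V → C → ℝ), t.1 ⊆ W ∧ PaidAtRate u ρ t ∧
      ∀ r, 0 ≤ r → r ≤ ρ → ∀ c ∉ t.1, ¬ affordable cost u t.2 r c := by
  induction hs using Relation.ReflTransGen.head_induction_on with
  | refl => exact ⟨(W, pay), subset_rfl, hinv, fun r hr _ => hterm r hr⟩
  | @head s s' hstep hrest ih =>
    have hsW := RuleXStep.reflTransGen_subset (hrest.head hstep)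
    obtain ⟨c, hc, r, hr, -, hmin, rfl⟩ := hstep
    by_cases hrρ : r ≤ ρ
    · exact ih (hinv.insert hu hc hrρ)
    · exact ⟨s, hsW, hinv, fun r' hr' hr'ρ c' hc' haff =>
        hrρ ((hmin r' hr' c' hc' haff).trans hr'ρ)⟩

theorem sum_min_le_cost_of_not_affordable [Fintype V] [Fintype C] {pay : V → C → ℝ} {c : C}
    (hc : 0 ≤ cost c) {ρ : ℝ} (hρ : 0 ≤ ρ) (hpay : ∀ i, totalPaid pay i ≤ 1 / Fintype.card V)
    (h : ∀ r, 0 ≤ r → r ≤ ρ → ¬ affordable cost u pay r c) :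
    ∑ i, min (1 / (Fintype.card V : ℝ) - totalPaid pay i) (u i c * ρ) ≤ cost c := by
  set g : ℝ → ℝ := fun r => ∑ i, min (1 / (Fintype.card V : ℝ) - totalPaid pay i) (u i c * r)
  have hg : Continuous g := continuous_finsetSum _ fun i _ =>
    continuous_const.min (continuous_const.mul continuous_id)
  have hg0 : g 0 = 0 := sum_eq_zero fun i _ => by simpa using hpay i
  by_contra! hlt
  obtain ⟨r, ⟨hr0, hrρ⟩, hr⟩ := intermediate_value_Icc hρ hg.continuousOn
    ⟨hg0.symm ▸ (by exact_mod_cast hc), hlt.le⟩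
  exact h r hr0 hrρ hr

theorem RuleXOutcome.mul_sum_util_le_costOf [Fintype V] [Fintype C] [DecidableEq C]
    (hcost : ∀ c, 0 ≤ cost c) (hu : ∀ i c, 0 ≤ u i c) {W : Finset C}
    (hW : RuleXOutcome cost u W) {ρ : ℝ} (hρ : 0 ≤ ρ) {S : Finset V} {T : Finset C}
    (hTW : Disjoint T W)
    (hST : ∀ i ∈ S, ∀ c ∈ T, ρ * util u i (insert c W) ≤ 1 / Fintype.card V) :
    ρ * ∑ i ∈ S, util u i T ≤ costOf cost T := by
  obtain ⟨pay, hrun, hterm⟩ := hW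
  obtain ⟨⟨Wt, pt⟩, hWt, hinv, hnaff⟩ :=
    exists_paidAtRate_not_affordable hu hterm hrun (paidAtRate_empty ρ)
  have hpays : ∀ i ∈ S, ∀ c ∈ T,
      min (1 / (Fintype.card V : ℝ) - totalPaid pt i) (u i c * ρ) = u i c * ρ := by
    intro i hi c hc
    have := hST i hi c hc
    rw [util_insert (disjoint_left.mp hTW hc), mul_add] at this
    have := mul_le_mul_of_nonneg_left (util_mono hu i hWt) hρ
    exact min_eq_right (by linarith [hinv.totalPaid_le_mul_util i])
  calc ρ * ∑ i ∈ S, util u i T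
      = ∑ c ∈ T, ∑ i ∈ S, min (1 / (Fintype.card V : ℝ) - totalPaid pt i) (u i c * ρ) := by
        simp only [util, mul_sum, sum_comm (s := S)]
        exact sum_congr rfl fun c hc => sum_congr rfl fun i hi => by
          rw [hpays i hi c hc, mul_comm]
    _ ≤ ∑ c ∈ T, ∑ i, min (1 / (Fintype.card V : ℝ) - totalPaid pt i) (u i c * ρ) := by
        refine sum_le_sum fun c _ => sum_le_sum_of_subset_of_nonneg (subset_univ S) ?_
        exact fun i _ _ => le_min (by linarith [hinv.totalPaid_le_share i])
          (mul_nonneg (hu i c) hρ)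
    _ ≤ costOf cost T := sum_le_sum fun c hc =>
        sum_min_le_cost_of_not_affordable (hcost c) hρ hinv.totalPaid_le_share
          fun r hr hrρ => hnaff r hr hrρ c fun hcWt => disjoint_left.mp hTW hc (hWt hcWt)

theorem RuleXOutcome.mul_sum_util_filter_le [Fintype V] [Nonempty V] [Fintype C] [DecidableEq C]
    (hcost : ∀ c, 0 ≤ cost c) (hu : ∀ i c, 0 ≤ u i c) {W : Finset C}
    (hW : RuleXOutcome cost u W) {S : Finset V} {T : Finset C} (hT : T.Nonempty)
    (hTS : costOf cost T ≤ S.card / Fintype.card V) {a : ℝ} (ha : 1 < a)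
    (hblock : ∀ i ∈ S, ∀ c ∈ T, util u i (insert c W) < util u i T / a) {z : ℝ} (hz : 0 < z) :
    (a - 1) * ∑ i ∈ S with util u i T ≤ z, util u i T ≤ S.card * z := by
  have hn : (0 : ℝ) < Fintype.card V := by exact_mod_cast Fintype.card_pos
  have ha0 : 0 < a := by linarith
  set ρ := a / (Fintype.card V * z)
  have hρ : 0 < ρ := by positivity
  obtain ⟨c₀, hc₀⟩ := hT
  have hgain : ∀ i ∈ S, (a - 1) * util u i T ≤ a * util u i (T \ W) := by
    intro i hi
    have hWT : a * util u i W < util u i T := by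
      rw [mul_comm, ← lt_div_iff₀ ha0]
      exact (util_mono hu i (subset_insert c₀ W)).trans_lt (hblock i hi c₀ hc₀)
    have hsplit : util u i T ≤ util u i (T \ W) + util u i W := by
      rw [util, ← sum_inter_add_sum_sdiff T W, add_comm]
      exact add_le_add_right (util_mono hu i inter_subset_right) _
    nlinarith
  have hafford := hW.mul_sum_util_le_costOf hcost hu hρ.le (S := S.filter (util u · T ≤ z))
    sdiff_disjoint fun i hi c hc => by
      obtain ⟨hiS, hiz⟩ := mem_filter.mp hi
      calc ρ * util u i (insert c W) ≤ ρ * (util u i T / a) :=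
            mul_le_mul_of_nonneg_left (hblock i hiS c (mem_sdiff.mp hc).1).le hρ.le
        _ = util u i T / z / Fintype.card V := by simp only [ρ]; field_simp
        _ ≤ 1 / Fintype.card V := by gcongr; rwa [div_le_one hz]
  have hcost_sdiff : costOf cost (T \ W) ≤ costOf cost T :=
    sum_le_sum_of_subset_of_nonneg sdiff_subset fun c _ _ => by exact_mod_cast hcost c
  have hρa : Fintype.card V * z * ρ = a := by
    simp only [ρ]
    field_simp
  calc (a - 1) * ∑ i ∈ S with util u i T ≤ z, util u i T
      ≤ a * ∑ i ∈ S with util u i T ≤ z, util u i (T \ W) := by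
        rw [mul_sum, mul_sum]
        exact sum_le_sum fun i hi => hgain i (mem_filter.mp hi).1
    _ = Fintype.card V * z * (ρ * ∑ i ∈ S with util u i T ≤ z, util u i (T \ W)) := by
        rw [← hρa]
        ring
    _ ≤ Fintype.card V * z * (S.card / Fintype.card V) := by
        gcongr
        exact hafford.trans (hcost_sdiff.trans hTS)
    _ = S.card * z := by field_simp

theorem util_le_sSup_feasible [Finite V] [Finite C] {T : Finset C} (hT : feasible cost T)
    (i : V) :
    util u i T ≤ sSup {x : ℝ | ∃ (i : V) (W' : Finset C), feasible cost W' ∧ util u i W' = x} :=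
  le_csSup ((Set.finite_range fun p : V × Finset C => util u p.1 p.2).subset
    (by rintro _ ⟨i, W', -, rfl⟩; exact ⟨(i, W'), rfl⟩)).bddAbove ⟨i, T, hT, rfl⟩

theorem sInf_positive_utils_pos_and_le [Finite V] [Finite C] {i : V} {T : Finset C}
    (h : 0 < util u i T) :
    0 < sInf {x : ℝ | ∃ (i : V) (W' : Finset C), util u i W' = x ∧ 0 < x} ∧
      sInf {x : ℝ | ∃ (i : V) (W' : Finset C), util u i W' = x ∧ 0 < x} ≤ util u i T := by
  have hfin : {x : ℝ | ∃ (i : V) (W' : Finset C), util u i W' = x ∧ 0 < x}.Finite :=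
    (Set.finite_range fun p : V × Finset C => util u p.1 p.2).subset
      (by rintro _ ⟨i, W', rfl, -⟩; exact ⟨(i, W'), rfl⟩)
  have hmem : util u i T ∈ {x : ℝ | ∃ (i : V) (W' : Finset C), util u i W' = x ∧ 0 < x} :=
    ⟨i, T, rfl, h⟩
  obtain ⟨-, -, -, hpos⟩ := Set.Nonempty.csInf_mem ⟨_, hmem⟩ hfin
  exact ⟨hpos, csInf_le hfin.bddBelow hmem⟩

end RuleX

theorem ruleX_alpha_core_general
    {V C : Type*} [Fintype V] [Fintype C] [DecidableEq C]
    (cost : C → ℚ) (u : V → C → ℝ) (hvalid : validPB cost u)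
    (W : Finset C) (hW : RuleXOutcome cost u W)
    (umax umin : ℝ)
    (humax : umax = sSup {x : ℝ | ∃ (i : V) (W' : Finset C), feasible cost W' ∧ util u i W' = x})
    (humin : umin = sInf {x : ℝ | ∃ (i : V) (W' : Finset C), util u i W' = x ∧ 0 < x}) :
    inAlphaCore cost u (4 * Real.log (2 * umax / umin)) W := by
  obtain ⟨hcost, hu, -⟩ := hvalid
  have hu₀ : ∀ i c, 0 ≤ u i c := fun i c => (hu i c).1
  intro S T hT hTS
  by_contra! hblock
  set a := 4 * log (2 * umax / umin) with ha
  obtain ⟨c₀, hc₀⟩ := hT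
  have hx : ∀ i ∈ S, 0 < util u i T := fun i hi => (util_nonneg hu₀ i T).lt_of_ne'
    (div_ne_zero_iff.mp ((util_nonneg hu₀ i _).trans_lt (hblock i hi c₀ hc₀)).ne').1
  obtain ⟨i₀, hi₀⟩ := nonempty_of_costOf_le_card_div hcost ⟨c₀, hc₀⟩ hTS
  have : Nonempty V := ⟨i₀⟩
  have hTfeas : feasible cost T :=
    hTS.trans (div_le_one_of_le₀ (by exact_mod_cast card_le_univ S) (Nat.cast_nonneg _))
  have hxmax : ∀ i ∈ S, util u i T ≤ umax := fun i _ => humax ▸ util_le_sSup_feasible hTfeas i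
  have hxmin : ∀ i ∈ S, umin ≤ util u i T :=
    fun i hi => humin ▸ (sInf_positive_utils_pos_and_le (hx i hi)).2
  have hmin : 0 < umin := humin ▸ (sInf_positive_utils_pos_and_le (hx i₀ hi₀)).1
  have hminmax : umin ≤ umax := (hxmin i₀ hi₀).trans (hxmax i₀ hi₀)
  have ha2 : 2 < a := two_lt_four_mul_log_two_mul_div hmin hminmax
  have hcard := mul_card_le_two_mul_mul_log S (util u · T) (by linarith) hmin hminmax
    (Nat.cast_nonneg S.card) hxmin hxmax
    fun z hz => hW.mul_sum_util_filter_le (fun c => (hcost c).le) hu₀ ⟨c₀, hc₀⟩ hTS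
      (by linarith) hblock hz
  rw [show log (2 * umax / umin) = a / 4 by rw [ha]; ring] at hcard
  have hS : (0 : ℝ) < S.card := Nat.cast_pos.mpr (card_pos.mpr ⟨i₀, hi₀⟩)
  nlinarith [mul_pos hS (sub_pos.mpr ha2)]

/-- Every Rule X outcome is in the α-core for
α = 4·ln(2·u_max/u_min), where u_max is the largest utility a voter gets from a
feasible outcome and u_min the smallest positive utility that a voter gets from
any set of candidates. -/
theorem ruleX_alpha_core
    {V C : Type*} [Fintype V] [DecidableEq V] [Fintype C] [DecidableEq C] [Nonempty V]
    (cost : C → ℚ) (u : V → C → ℝ) (hvalid : validPB cost u)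
    (W : Finset C) (hW : RuleXOutcome cost u W)
    (umax umin : ℝ)
    (humax : umax = sSup {x : ℝ | ∃ (i : V) (W' : Finset C), feasible cost W' ∧ util u i W' = x})
    (humin : umin = sInf {x : ℝ | ∃ (i : V) (W' : Finset C), util u i W' = x ∧ 0 < x}) :
    inAlphaCore cost u (4 * Real.log (2 * umax / umin)) W :=
  ruleX_alpha_core_general cost u hvalid W hW umax umin humax humin
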